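/- arXiv:1604.00851 — 3 statements merged into one kernel-verified Lean document; each statement's English description precedes it below -/
import Mathlib

section
/- The space R = {f ∈ L¹ + L^∞ : μ_t(f) → 0 as t → ∞}, equipped with the norm ‖f‖ = ∫₀¹ μ_t(f) dt, is the closure of L¹ ∩ L^∞ in L¹ + L^∞. -/
open MeasureTheory Filter Topology
open scoped ENNReal NNReal

/-- The decreasing rearrangement `μ_t(f) = inf{λ > 0 : μ({|f| > λ}) ≤ t}`. -/
noncomputable def rearr {X : Type*} [MeasurableSpace X] (μ : Measure X) (f : X → ℂ) (t : ℝ) : ℝ :=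
  sInf {l : ℝ | 0 < l ∧ μ {x | l < ‖f x‖} ≤ ENNReal.ofReal t}

/-- Membership in the sum space `L¹ + L^∞`. -/
def MemL1Linf {X : Type*} [MeasurableSpace X] (μ : Measure X) (f : X → ℂ) : Prop :=
  ∃ g h, f = g + h ∧ MemLp g 1 μ ∧ MemLp h ⊤ μ

/-- The norm on `L¹ + L^∞`: `inf{‖g‖₁ + ‖h‖_∞ : f = g + h}`. -/
noncomputable def sumNorm {X : Type*} [MeasurableSpace X] (μ : Measure X) (f : X → ℂ) : ℝ :=
  sInf {r : ℝ | ∃ g h, f = g + h ∧ MemLp g 1 μ ∧ MemLp h ⊤ μ ∧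
    r = (eLpNorm g 1 μ).toReal + (eLpNorm h ⊤ μ).toReal}

section Aux

variable {X : Type*} [MeasurableSpace X] {μ : Measure X}

/-- Markov/Chebyshev: an `L¹` function has finite distribution. -/
lemma markov_lt_top {u : X → ℂ} (hu : MemLp u 1 μ) {a : ℝ} (ha : 0 < a) :
    μ {x | a < ‖u x‖} < ⊤ := by
  have h1 : μ {x | a < ‖u x‖} ≤ μ {x | ENNReal.ofReal a ≤ (‖u x‖₊ : ℝ≥0∞)} := by
    apply measure_mono
    intro x hx
    simp only [Set.mem_setOf_eq] at hx ⊢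
    calc ENNReal.ofReal a ≤ ENNReal.ofReal ‖u x‖ := ENNReal.ofReal_le_ofReal hx.le
      _ = (‖u x‖₊ : ℝ≥0∞) := ofReal_norm _
  have h2 : μ {x | ENNReal.ofReal a ≤ (‖u x‖₊ : ℝ≥0∞)} ≤
      (∫⁻ x, (‖u x‖₊ : ℝ≥0∞) ∂μ) / ENNReal.ofReal a :=
    meas_ge_le_lintegral_div hu.1.enorm
      (by simp [ENNReal.ofReal_eq_zero, not_le, ha]) ENNReal.ofReal_ne_top
  have h3 : (∫⁻ x, (‖u x‖₊ : ℝ≥0∞) ∂μ) < ⊤ := by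
    have := hu.2; rw [eLpNorm_one_eq_lintegral_enorm] at this; exact this
  exact lt_of_le_of_lt (le_trans h1 h2)
    (ENNReal.div_lt_top h3.ne (by simp [ENNReal.ofReal_eq_zero, not_le, ha]))

lemma sumNorm_bddBelow (f : X → ℂ) :
    BddBelow {r : ℝ | ∃ g h, f = g + h ∧ MemLp g 1 μ ∧ MemLp h ⊤ μ ∧
      r = (eLpNorm g 1 μ).toReal + (eLpNorm h ⊤ μ).toReal} := by
  refine ⟨0, fun r hr => ?_⟩
  obtain ⟨g, h, -, -, -, rfl⟩ := hr
  positivity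

lemma sumNorm_le {F u v : X → ℂ} (hF : F = u + v) (hu : MemLp u 1 μ) (hv : MemLp v ⊤ μ) :
    sumNorm μ F ≤ (eLpNorm u 1 μ).toReal + (eLpNorm v ⊤ μ).toReal :=
  csInf_le (sumNorm_bddBelow F) ⟨u, v, hF, hu, hv, rfl⟩

/-- a.e. bound for the `L^∞` part. -/
lemma ae_norm_le_toReal {h : X → ℂ} (hh : MemLp h ⊤ μ) :
    ∀ᵐ x ∂μ, ‖h x‖ ≤ (eLpNorm h ⊤ μ).toReal := by
  have h1 : ∀ᵐ x ∂μ, (‖h x‖₊ : ℝ≥0∞) ≤ eLpNormEssSup h μ := ae_le_eLpNormEssSup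
  have hfin : eLpNormEssSup h μ ≠ ⊤ := by
    rw [← eLpNorm_exponent_top]; exact hh.2.ne
  filter_upwards [h1] with x hx
  rw [eLpNorm_exponent_top]
  calc ‖h x‖ = ((‖h x‖₊ : ℝ≥0∞)).toReal := by simp
    _ ≤ (eLpNormEssSup h μ).toReal := ENNReal.toReal_mono hfin hx

/-- The key dichotomy: `rearr μ f → 0` iff all distribution sets are finite. -/
lemma tendsto_rearr_iff {f : X → ℂ} (hf : Measurable f) (hmem : MemL1Linf μ f) :
    Tendsto (rearr μ f) atTop (𝓝 0) ↔ ∀ δ > (0 : ℝ), μ {x | δ < ‖f x‖} < ⊤ := by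
  obtain ⟨g₀, h₀, hfd, hg₀, hh₀⟩ := hmem
  set c : ℝ := (eLpNorm h₀ ⊤ μ).toReal with hc
  have hc0 : 0 ≤ c := ENNReal.toReal_nonneg
  -- a set of finite measure at level `c + 1`
  have hK : μ {x | c + 1 < ‖f x‖} < ⊤ := by
    have hbd : ∀ᵐ x ∂μ, ‖f x‖ ≤ ‖g₀ x‖ + c := by
      filter_upwards [ae_norm_le_toReal hh₀] with x hx
      have : f x = g₀ x + h₀ x := by rw [hfd]; rfl
      rw [this]
      exact (norm_add_le _ _).trans (by linarith)
    have hsub : {x | c + 1 < ‖f x‖} ≤ᵐ[μ] {x | 1 < ‖g₀ x‖} := by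
      filter_upwards [hbd] with x hx hx'
      have hx'' : c + 1 < ‖f x‖ := hx'
      show 1 < ‖g₀ x‖
      linarith
    exact lt_of_le_of_lt (measure_mono_ae hsub) (markov_lt_top hg₀ one_pos)
  set K : ℝ≥0∞ := μ {x | c + 1 < ‖f x‖} with hKdef
  constructor
  · intro hT δ hδ
    have h1 : ∀ᶠ t in atTop, rearr μ f t < δ := hT.eventually (Iio_mem_nhds hδ)
    have h2 : ∀ᶠ t : ℝ in atTop, K.toReal ≤ t := eventually_ge_atTop _
    obtain ⟨t, h1t, h2t⟩ := (h1.and h2).exists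
    have hne : (c + 1) ∈ {l : ℝ | 0 < l ∧ μ {x | l < ‖f x‖} ≤ ENNReal.ofReal t} := by
      refine ⟨by linarith, ?_⟩
      calc K = ENNReal.ofReal K.toReal := by rw [ENNReal.ofReal_toReal hK.ne]
        _ ≤ ENNReal.ofReal t := ENNReal.ofReal_le_ofReal h2t
    obtain ⟨l, hl, hlδ⟩ := exists_lt_of_csInf_lt ⟨_, hne⟩ h1t
    have : μ {x | δ < ‖f x‖} ≤ μ {x | l < ‖f x‖} := by
      apply measure_mono; intro x hx
      simp only [Set.mem_setOf_eq] at hx ⊢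
      linarith
    exact lt_of_le_of_lt (this.trans hl.2) (by simp [ENNReal.ofReal_lt_top])
  · intro hfin
    rw [Metric.tendsto_atTop]
    intro ε hε
    refine ⟨(μ {x | ε / 2 < ‖f x‖}).toReal, fun t ht => ?_⟩
    have hmemset : ε / 2 ∈ {l : ℝ | 0 < l ∧ μ {x | l < ‖f x‖} ≤ ENNReal.ofReal t} := by
      refine ⟨by linarith, ?_⟩
      calc μ {x | ε / 2 < ‖f x‖} = ENNReal.ofReal (μ {x | ε / 2 < ‖f x‖}).toReal := by
            rw [ENNReal.ofReal_toReal (hfin _ (by linarith)).ne]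
        _ ≤ ENNReal.ofReal t := ENNReal.ofReal_le_ofReal ht
    have hle : rearr μ f t ≤ ε / 2 :=
      csInf_le ⟨0, fun l hl => hl.1.le⟩ hmemset
    have hge : 0 ≤ rearr μ f t := Real.sInf_nonneg (fun l hl => hl.1.le)
    rw [Real.dist_eq, sub_zero, abs_of_nonneg hge]
    linarith

end Aux

/-- `R = {f ∈ L¹+L^∞ : μ_t(f) → 0 as t → ∞}` is the closure of `L¹ ∩ L^∞` in `L¹ + L^∞`:
an element `f` of `L¹ + L^∞` belongs to `R` iff it can be approximated in the
`L¹ + L^∞`-norm by elements of `L¹ ∩ L^∞`. -/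
theorem memR_iff_closure_of_L1_inter_Linf {X : Type*} [MeasurableSpace X]
    (μ : Measure X) [SigmaFinite μ] (hμ : μ Set.univ = ⊤)
    (f : X → ℂ) (hf : Measurable f) (hmem : MemL1Linf μ f) :
    Tendsto (rearr μ f) atTop (𝓝 0) ↔
      ∀ ε > (0 : ℝ), ∃ g : X → ℂ, MemLp g 1 μ ∧ MemLp g ⊤ μ ∧ sumNorm μ (f - g) < ε := by
  rw [tendsto_rearr_iff hf hmem]
  obtain ⟨g₀, h₀, hfd, hg₀, hh₀⟩ := hmem
  constructor
  · -- finiteness of distribution sets → approximation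
    intro hfin ε hε
    set c : ℝ := (eLpNorm h₀ ⊤ μ).toReal with hc
    have hc0 : 0 ≤ c := ENNReal.toReal_nonneg
    have hbd : ∀ᵐ x ∂μ, (‖f x‖₊ : ℝ≥0∞) ≤ (‖g₀ x‖₊ : ℝ≥0∞) + ENNReal.ofReal c := by
      filter_upwards [ae_norm_le_toReal hh₀] with x hx
      have hfx : ‖f x‖ ≤ ‖g₀ x‖ + c := by
        have hx' : f x = g₀ x + h₀ x := by rw [hfd]; rfl
        rw [hx']; exact (norm_add_le _ _).trans (by linarith)
      calc (‖f x‖₊ : ℝ≥0∞) = ENNReal.ofReal ‖f x‖ := (ofReal_norm _).symm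
        _ ≤ ENNReal.ofReal (‖g₀ x‖ + c) := ENNReal.ofReal_le_ofReal hfx
        _ = (‖g₀ x‖₊ : ℝ≥0∞) + ENNReal.ofReal c := by
            rw [ENNReal.ofReal_add (norm_nonneg _) hc0, ofReal_norm, enorm_eq_nnnorm]
    set T : ℕ → Set X := fun n => {x | (n : ℝ) + 1 < ‖f x‖} with hT
    have hTmeas : ∀ n, MeasurableSet (T n) := fun n =>
      measurableSet_lt measurable_const hf.norm
    have hTanti : Antitone T := by
      intro m n hmn x hx
      simp only [hT, Set.mem_setOf_eq] at hx ⊢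
      have : (m : ℝ) ≤ n := Nat.cast_le.2 hmn
      linarith
    have hTempty : ⋂ n, T n = ∅ := by
      ext x
      simp only [Set.mem_iInter, Set.mem_empty_iff_false, iff_false, not_forall, hT,
        Set.mem_setOf_eq, not_lt]
      obtain ⟨n, hn⟩ := exists_nat_gt ‖f x‖
      exact ⟨n, by linarith⟩
    have hT0 : μ (T 0) < ⊤ := by
      have h1 := hfin 1 one_pos
      have h2 : T 0 = {x | (1 : ℝ) < ‖f x‖} := by
        simp only [hT]; norm_num
      rwa [h2]
    have hTto : Tendsto (fun n => μ (T n)) atTop (𝓝 0) := by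
      have h := tendsto_measure_iInter_atTop (fun n => (hTmeas n).nullMeasurableSet)
        hTanti ⟨0, hT0.ne⟩
      rw [hTempty, measure_empty] at h
      exact h
    have hg₀fin : (∫⁻ x, (‖g₀ x‖₊ : ℝ≥0∞) ∂μ) ≠ ⊤ := by
      have := hg₀.2.ne; rw [eLpNorm_one_eq_lintegral_enorm] at this; exact this
    have hIto : Tendsto (fun n => ∫⁻ x in T n, (‖g₀ x‖₊ : ℝ≥0∞) ∂μ) atTop (𝓝 0) :=
      tendsto_setLIntegral_zero hg₀fin hTto
    have hJto : Tendsto (fun n => (∫⁻ x in T n, (‖g₀ x‖₊ : ℝ≥0∞) ∂μ) +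
        ENNReal.ofReal c * μ (T n)) atTop (𝓝 0) := by
      have h2 : Tendsto (fun n => ENNReal.ofReal c * μ (T n)) atTop (𝓝 0) := by
        have h3 := ENNReal.Tendsto.const_mul (a := ENNReal.ofReal c) hTto (Or.inr ENNReal.ofReal_ne_top)
        simpa using h3
      simpa using hIto.add h2
    have hfint : ∀ n, ∫⁻ x in T n, (‖f x‖₊ : ℝ≥0∞) ∂μ ≤
        (∫⁻ x in T n, (‖g₀ x‖₊ : ℝ≥0∞) ∂μ) + ENNReal.ofReal c * μ (T n) := by
      intro n
      calc ∫⁻ x in T n, (‖f x‖₊ : ℝ≥0∞) ∂μ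
          ≤ ∫⁻ x in T n, ((‖g₀ x‖₊ : ℝ≥0∞) + ENNReal.ofReal c) ∂μ :=
            lintegral_mono_ae (ae_restrict_of_ae hbd)
        _ = (∫⁻ x in T n, (‖g₀ x‖₊ : ℝ≥0∞) ∂μ) + ∫⁻ _ in T n, ENNReal.ofReal c ∂μ :=
            lintegral_add_right' _ aemeasurable_const
        _ = _ := by rw [setLIntegral_const]
    have hev : ∀ᶠ n : ℕ in atTop, (∫⁻ x in T n, (‖g₀ x‖₊ : ℝ≥0∞) ∂μ) +
        ENNReal.ofReal c * μ (T n) < ENNReal.ofReal (ε / 4) :=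
      hJto.eventually (Iio_mem_nhds (by rw [ENNReal.ofReal_pos]; linarith))
    obtain ⟨n, hn1, hn2⟩ := (hev.and (eventually_ge_atTop ⌈ε / 2⌉₊)).exists
    have hδn : ε / 2 < (n : ℝ) + 1 := by
      have h1 : ε / 2 ≤ (⌈ε / 2⌉₊ : ℝ) := Nat.le_ceil _
      have h2 : ((⌈ε / 2⌉₊ : ℕ) : ℝ) ≤ (n : ℝ) := Nat.cast_le.2 hn2
      linarith
    set δ : ℝ := ε / 2 with hδdef
    have hδpos : 0 < δ := by rw [hδdef]; linarith
    set A : Set X := {x | δ < ‖f x‖ ∧ ‖f x‖ ≤ (n : ℝ) + 1} with hA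
    have hAmeas : MeasurableSet A :=
      (measurableSet_lt measurable_const hf.norm).inter
        (measurableSet_le hf.norm measurable_const)
    set g : X → ℂ := A.indicator f with hgdef
    set u : X → ℂ := (T n).indicator f with hudef
    set v : X → ℂ := {x | ‖f x‖ ≤ δ}.indicator f with hvdef
    have hgsm : Measurable g := hf.indicator hAmeas
    have hguv : f - g = u + v := by
      funext x
      simp only [Pi.sub_apply, Pi.add_apply, hgdef, hudef, hvdef, Set.indicator_apply,
        hT, hA, Set.mem_setOf_eq]
      by_cases h1 : ‖f x‖ ≤ δ
      · rw [if_neg (fun hcon => absurd hcon.1 (not_lt.2 h1)), if_pos h1,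
          if_neg (by push_neg; linarith)]
        ring
      · push_neg at h1
        by_cases h2 : ‖f x‖ ≤ (n : ℝ) + 1
        · rw [if_pos ⟨h1, h2⟩, if_neg (not_lt.2 h2), if_neg (not_le.2 h1)]
          ring
        · push_neg at h2
          rw [if_neg (fun hcon => absurd hcon.2 (not_le.2 h2)), if_pos h2,
            if_neg (not_le.2 h1)]
          ring
    have hgtop : MemLp g ⊤ μ := by
      refine memLp_top_of_bound hgsm.aestronglyMeasurable ((n : ℝ) + 1) (ae_of_all _ fun x => ?_)
      simp only [hgdef, Set.indicator_apply]
      split_ifs with h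
      · exact h.2
      · simp; positivity
    have hgone : MemLp g 1 μ := by
      refine ⟨hgsm.aestronglyMeasurable, ?_⟩
      rw [eLpNorm_one_eq_lintegral_enorm]
      have hb : ∀ x, (‖g x‖₊ : ℝ≥0∞) ≤
          Set.indicator {x | δ < ‖f x‖} (fun _ => ENNReal.ofReal ((n : ℝ) + 1)) x := by
        intro x
        simp only [hgdef, Set.indicator_apply, hA, Set.mem_setOf_eq]
        split_ifs with h1 h2 h3
        · rw [← enorm_eq_nnnorm, ← ofReal_norm]
          exact ENNReal.ofReal_le_ofReal h1.2
        · exact absurd h1.1 h2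
        · simp
        · simp
      calc (∫⁻ x, (‖g x‖₊ : ℝ≥0∞) ∂μ)
          ≤ ∫⁻ x, Set.indicator {x | δ < ‖f x‖} (fun _ => ENNReal.ofReal ((n : ℝ) + 1)) x ∂μ :=
            lintegral_mono hb
        _ = ENNReal.ofReal ((n : ℝ) + 1) * μ {x | δ < ‖f x‖} :=
            lintegral_indicator_const (measurableSet_lt measurable_const hf.norm) _
        _ < ⊤ := ENNReal.mul_lt_top ENNReal.ofReal_lt_top (hfin δ hδpos)
    have husm : Measurable u := hf.indicator (hTmeas n)
    have huint : eLpNorm u 1 μ < ENNReal.ofReal (ε / 4) := by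
      rw [eLpNorm_one_eq_lintegral_enorm]
      have heq : (∫⁻ x, (‖u x‖₊ : ℝ≥0∞) ∂μ) = ∫⁻ x in T n, (‖f x‖₊ : ℝ≥0∞) ∂μ := by
        rw [← lintegral_indicator (hTmeas n)]
        congr 1
        funext x
        simp only [hudef, Set.indicator_apply]
        split_ifs <;> simp
      change (∫⁻ x, (‖u x‖₊ : ℝ≥0∞) ∂μ) < _
      rw [heq]
      exact lt_of_le_of_lt (hfint n) hn1
    have humem : MemLp u 1 μ := ⟨husm.aestronglyMeasurable,
      lt_of_lt_of_le huint le_top⟩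
    have hvsm : Measurable v := hf.indicator (measurableSet_le hf.norm measurable_const)
    have hvbd : ∀ x, ‖v x‖ ≤ δ := by
      intro x
      simp only [hvdef, Set.indicator_apply, Set.mem_setOf_eq]
      split_ifs with h
      · exact h
      · simp; positivity
    have hvmem : MemLp v ⊤ μ := memLp_top_of_bound hvsm.aestronglyMeasurable δ
      (ae_of_all _ hvbd)
    have hvnorm : eLpNorm v ⊤ μ ≤ ENNReal.ofReal δ := by
      rw [eLpNorm_exponent_top]
      exact eLpNormEssSup_le_of_ae_bound (ae_of_all _ hvbd)
    refine ⟨g, hgone, hgtop, ?_⟩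
    have hfinal := sumNorm_le hguv humem hvmem
    have h1 : (eLpNorm u 1 μ).toReal < ε / 4 := ENNReal.toReal_lt_of_lt_ofReal huint
    have h2 : (eLpNorm v ⊤ μ).toReal ≤ δ :=
      ENNReal.toReal_le_of_le_ofReal hδpos.le hvnorm
    rw [hδdef] at h2
    linarith
  · -- approximation → finiteness of distribution sets
    intro happ δ hδ
    obtain ⟨g, hg1, hginf, hsn⟩ := happ (δ / 2) (by linarith)
    have hne : Set.Nonempty {r : ℝ | ∃ u v, f - g = u + v ∧ MemLp u 1 μ ∧ MemLp v ⊤ μ ∧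
        r = (eLpNorm u 1 μ).toReal + (eLpNorm v ⊤ μ).toReal} := by
      refine ⟨_, g₀ - g, h₀, ?_, hg₀.sub hg1, hh₀, rfl⟩
      rw [hfd]; funext x
      simp only [Pi.sub_apply, Pi.add_apply]
      ring
    obtain ⟨r, ⟨u, v, huv, hu, hv, hr⟩, hrlt⟩ := exists_lt_of_csInf_lt hne hsn
    have hvnorm : (eLpNorm v ⊤ μ).toReal < δ / 2 := by
      have h0 : (0 : ℝ) ≤ (eLpNorm u 1 μ).toReal := ENNReal.toReal_nonneg
      rw [hr] at hrlt; linarith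
    have hvnull : μ {x | 2 * δ / 3 < ‖v x‖} = 0 := by
      have hvae : ∀ᵐ x ∂μ, ¬ (2 * δ / 3 < ‖v x‖) := by
        filter_upwards [ae_norm_le_toReal hv] with x hx
        intro hcon
        have : ‖v x‖ < δ / 2 := lt_of_le_of_lt hx hvnorm
        linarith
      rw [ae_iff] at hvae
      simpa using hvae
    have hunorm : μ {x | δ / 6 < ‖u x‖} < ⊤ := markov_lt_top hu (by linarith)
    have hgnorm : μ {x | δ / 6 < ‖g x‖} < ⊤ := markov_lt_top hg1 (by linarith)
    have hsubset : {x | δ < ‖f x‖} ⊆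
        ({x | δ / 6 < ‖g x‖} ∪ {x | δ / 6 < ‖u x‖}) ∪ {x | 2 * δ / 3 < ‖v x‖} := by
      intro x hx
      by_contra hcon
      simp only [Set.mem_union, Set.mem_setOf_eq, not_or, not_lt] at hcon
      obtain ⟨⟨h1, h2⟩, h3⟩ := hcon
      have hfe : f x = u x + v x + g x := by
        have hxe := congrFun huv x
        simp only [Pi.sub_apply, Pi.add_apply] at hxe
        linear_combination hxe
      have hnb : ‖f x‖ ≤ ‖u x‖ + ‖v x‖ + ‖g x‖ := by
        rw [hfe]
        exact (norm_add_le _ _).trans (by gcongr; exact norm_add_le _ _)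
      have hx' : δ < ‖f x‖ := hx
      linarith
    calc μ {x | δ < ‖f x‖}
        ≤ μ (({x | δ / 6 < ‖g x‖} ∪ {x | δ / 6 < ‖u x‖}) ∪ {x | 2 * δ / 3 < ‖v x‖}) :=
          measure_mono hsubset
      _ ≤ μ ({x | δ / 6 < ‖g x‖} ∪ {x | δ / 6 < ‖u x‖}) + μ {x | 2 * δ / 3 < ‖v x‖} :=
          measure_union_le _ _
      _ = μ ({x | δ / 6 < ‖g x‖} ∪ {x | δ / 6 < ‖u x‖}) := by rw [hvnull, add_zero]
      _ ≤ μ {x | δ / 6 < ‖g x‖} + μ {x | δ / 6 < ‖u x‖} := measure_union_le _ _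
      _ < ⊤ := ENNReal.add_lt_top.2 ⟨hgnorm, hunorm⟩
end

section
/- Let f ∈ L¹ + L^∞ over a σ-finite measure space with μ_t(f) → 0 as t → ∞, and suppose (h_n) ⊂ L¹ + L^∞ with h_n ≺≺ f for all n and h_n → h almost uniformly. If the unit ball of L¹ + L^∞ is closed in the topology of local convergence in measure, then h ∈ L¹ + L^∞ and ‖h‖_{L¹+L^∞} ≤ ‖f‖_{L¹+L^∞}. -/
open MeasureTheory Filter Topology

/-- Local convergence in measure. -/
def LocConvMeasure {X : Type*} [MeasurableSpace X] (μ : Measure X)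
    (g : ℕ → X → ℂ) (g₀ : X → ℂ) : Prop :=
  ∀ A : Set X, MeasurableSet A → μ A < ⊤ → ∀ δ > (0 : ℝ),
    Tendsto (fun n => μ {x | x ∈ A ∧ δ ≤ ‖g n x - g₀ x‖}) atTop (𝓝 0)

namespace Au
open ENNReal NNReal Set
variable {X : Type*} [MeasurableSpace X] {μ : Measure X}

def S (μ : Measure X) (g : X → ℂ) (t : ℝ) : Set ℝ :=
  {l : ℝ | 0 < l ∧ μ {x | l < ‖g x‖} ≤ ENNReal.ofReal t}

lemma rearr_eq (g : X → ℂ) (t : ℝ) : rearr μ g t = sInf (S μ g t) := rfl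

lemma S_bdd (g : X → ℂ) (t : ℝ) : BddBelow (S μ g t) := ⟨0, fun _ hy => hy.1.le⟩

lemma rearr_nonneg (g : X → ℂ) (t : ℝ) : 0 ≤ rearr μ g t :=
  Real.sInf_nonneg fun _ hy => hy.1.le

lemma rearr_le {g : X → ℂ} {t l : ℝ} (hl : 0 < l) (hd : μ {x | l < ‖g x‖} ≤ ENNReal.ofReal t) :
    rearr μ g t ≤ l := csInf_le (S_bdd g t) ⟨hl, hd⟩

lemma le_rearr {g : X → ℂ} {t l : ℝ} (hS : (S μ g t).Nonempty)
    (hd : ENNReal.ofReal t < μ {x | l < ‖g x‖}) : l ≤ rearr μ g t := by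
  by_contra hlt
  push_neg at hlt
  obtain ⟨l'', hl''S, hl''⟩ := exists_lt_of_csInf_lt hS hlt
  exact absurd (le_trans (measure_mono (fun x (hx : l < ‖g x‖) => lt_trans hl'' hx)) hl''S.2)
    (not_le.mpr hd)

lemma rearr_anti {g : X → ℂ} {t t' : ℝ} (hS : (S μ g t).Nonempty) (htt' : t ≤ t') :
    rearr μ g t' ≤ rearr μ g t :=
  csInf_le_csInf (S_bdd g t') hS fun l hl => ⟨hl.1, hl.2.trans (by gcongr)⟩


variable {X : Type*} [MeasurableSpace X] {μ : Measure X}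

-- a.e. bound for L∞ part
lemma ae_norm_le {v : X → ℂ} (hv : MemLp v ⊤ μ) :
    ∀ᵐ x ∂μ, ‖v x‖ ≤ (eLpNorm v ⊤ μ).toReal := by
  have h1 : ∀ᵐ x ∂μ, (‖v x‖₊ : ℝ≥0∞) ≤ eLpNormEssSup v μ := enorm_ae_le_eLpNormEssSup v μ
  filter_upwards [h1] with x hx
  have hfin : eLpNormEssSup v μ ≠ ⊤ := by
    simpa [eLpNorm_exponent_top] using hv.2.ne
  have := ENNReal.toReal_mono hfin hx
  simpa [ENNReal.coe_toReal] using this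

-- key inclusion: f = u + v, ‖v‖ ≤ A a.e. ⇒ μ{l+A<‖f‖} ≤ μ{l ≤ ‖u‖} (even < works)
lemma meas_add_le {f u v : X → ℂ} (hfuv : f = u + v) {A l : ℝ}
    (hv : ∀ᵐ x ∂μ, ‖v x‖ ≤ A) :
    μ {x | l + A < ‖f x‖} ≤ μ {x | l < ‖u x‖} := by
  apply measure_mono_ae
  filter_upwards [hv] with x hx hmem
  have : ‖f x‖ ≤ ‖u x‖ + ‖v x‖ := by rw [hfuv]; exact norm_add_le _ _
  have : l + A < ‖u x‖ + A := lt_of_lt_of_le hmem (this.trans (by linarith))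
  exact lt_of_add_lt_add_right this

-- Markov
lemma markov {u : X → ℂ} (hu : MemLp u 1 μ) {t : ℝ} (ht : 0 < t) :
    ∃ m : ℝ, 0 < m ∧ μ {x | m ≤ ‖u x‖} ≤ ENNReal.ofReal t := by
  set K : ℝ≥0∞ := ∫⁻ x, ‖u x‖₊ ∂μ with hK
  have hKfin : K ≠ ⊤ := by
    have := hu.2
    rw [eLpNorm_one_eq_lintegral_enorm] at this; exact this.ne
  refine ⟨K.toReal / t + 1, by positivity, ?_⟩
  set m : ℝ := K.toReal / t + 1 with hm
  have hmark : ENNReal.ofReal m * μ {x | ENNReal.ofReal m ≤ (‖u x‖₊ : ℝ≥0∞)} ≤ K :=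
    mul_meas_ge_le_lintegral₀ (hu.1.aemeasurable.nnnorm.coe_nnreal_ennreal) _
  have hset : {x | ENNReal.ofReal m ≤ (‖u x‖₊ : ℝ≥0∞)} = {x | m ≤ ‖u x‖} := by
    ext x
    simp [ENNReal.ofReal_le_iff_le_toReal, ENNReal.ofReal, ← norm_toNNReal,
      Real.toNNReal_le_toNNReal_iff (norm_nonneg _)]
  rw [hset] at hmark
  have hKle : K ≤ ENNReal.ofReal m * ENNReal.ofReal t := by
    rw [← ENNReal.ofReal_mul (by positivity)]
    have : K.toReal ≤ m * t := by
      rw [hm]; field_simp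
      nlinarith [ENNReal.toReal_nonneg (a := K), ht]
    calc K = ENNReal.ofReal K.toReal := (ENNReal.ofReal_toReal hKfin).symm
      _ ≤ _ := ENNReal.ofReal_le_ofReal this
  have hm0 : ENNReal.ofReal m ≠ 0 := by simp [hm]; positivity
  exact (ENNReal.mul_le_mul_iff_right hm0 ENNReal.ofReal_ne_top).mp (hmark.trans hKle)

lemma S_nonempty_of_L1 {u : X → ℂ} (hu : MemLp u 1 μ) {t : ℝ} (ht : 0 < t) :
    (S μ u t).Nonempty := by
  obtain ⟨m, hm, hmle⟩ := markov hu ht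
  refine ⟨m, hm, le_trans (measure_mono ?_) hmle⟩
  intro x (hx : m < ‖u x‖)
  exact le_of_lt hx




-- volume of {t>0 : ofReal t < D} = D
lemma vol_lt (D : ℝ≥0∞) : (volume.restrict (Ioi (0:ℝ))) {t : ℝ | ENNReal.ofReal t < D} = D := by
  rw [Measure.restrict_apply₀]
  · rcases eq_or_ne D ⊤ with hD | hD
    · have : {t : ℝ | ENNReal.ofReal t < D} ∩ Ioi 0 = Ioi 0 := by
        ext t; simp [hD, ENNReal.ofReal_lt_top]
      rw [this, Real.volume_Ioi]; exact hD.symm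
    · have : {t : ℝ | ENNReal.ofReal t < D} ∩ Ioi 0 = Ioo 0 D.toReal := by
        ext t
        simp only [mem_inter_iff, mem_setOf_eq, mem_Ioi, mem_Ioo]
        constructor
        · rintro ⟨h1, h2⟩
          exact ⟨h2, (ENNReal.ofReal_lt_iff_lt_toReal (le_of_lt h2) hD).mp h1⟩
        · rintro ⟨h1, h2⟩
          exact ⟨(ENNReal.ofReal_lt_iff_lt_toReal (le_of_lt h1) hD).mpr h2, h1⟩
      rw [this, Real.volume_Ioo, sub_zero, ENNReal.ofReal_toReal hD]
  · -- NullMeasurableSet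
    refine (MeasurableSet.nullMeasurableSet ?_)
    have : {t : ℝ | ENNReal.ofReal t < D} = ENNReal.ofReal ⁻¹' (Iio D) := rfl
    rw [this]
    exact ENNReal.measurable_ofReal measurableSet_Iio




lemma rearr_aemeas {g : X → ℂ} (hS : ∀ t : ℝ, 0 < t → (S μ g t).Nonempty) :
    AEMeasurable (rearr μ g) (volume.restrict (Ioi (0:ℝ))) := by
  refine aemeasurable_restrict_of_antitoneOn measurableSet_Ioi ?_
  intro t ht t' _ htt'
  exact rearr_anti (hS t ht) htt'

lemma restrict_meas_le {g : X → ℂ} {l : ℝ} (hl : 0 < l) :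
    (volume.restrict (Ioi (0:ℝ))) {t : ℝ | l < rearr μ g t} ≤ μ {x | l < ‖g x‖} := by
  set D := μ {x | l < ‖g x‖}
  have hsub : {t : ℝ | l < rearr μ g t} ⊆ {t : ℝ | ENNReal.ofReal t < D} ∪ Iic 0 := by
    intro t ht
    rcases le_or_gt t 0 with h | h
    · exact Or.inr h
    · left
      by_contra hc
      simp only [mem_setOf_eq, not_lt] at hc
      exact absurd (rearr_le hl hc) (not_le.mpr ht)
  calc (volume.restrict (Ioi (0:ℝ))) {t : ℝ | l < rearr μ g t}
      ≤ (volume.restrict (Ioi (0:ℝ))) ({t : ℝ | ENNReal.ofReal t < D} ∪ Iic 0) :=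
        measure_mono hsub
    _ ≤ (volume.restrict (Ioi (0:ℝ))) {t : ℝ | ENNReal.ofReal t < D}
        + (volume.restrict (Ioi (0:ℝ))) (Iic 0) := measure_union_le _ _
    _ = D := by
        rw [vol_lt, Measure.restrict_apply measurableSet_Iic]
        rw [Iic_inter_Ioi]
        simp

-- LC-up : ∫⁻_{t>0} rearr u ≤ ‖u‖₁
lemma lintegral_rearr_le {u : X → ℂ} (hu : MemLp u 1 μ) :
    ∫⁻ t in Ioi (0:ℝ), ENNReal.ofReal (rearr μ u t) ≤ ∫⁻ x, (‖u x‖₊ : ℝ≥0∞) ∂μ := by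
  have hmble : AEMeasurable (rearr μ u) (volume.restrict (Ioi (0:ℝ))) :=
    rearr_aemeas fun t ht => S_nonempty_of_L1 hu ht
  have hnn : 0 ≤ᵐ[volume.restrict (Ioi (0:ℝ))] rearr μ u :=
    Filter.Eventually.of_forall (rearr_nonneg u)
  rw [lintegral_eq_lintegral_meas_lt _ hnn hmble]
  have step : ∫⁻ l in Ioi (0:ℝ), (volume.restrict (Ioi (0:ℝ))) {t : ℝ | l < rearr μ u t}
      ≤ ∫⁻ l in Ioi (0:ℝ), μ {x | l < ‖u x‖} := by
    refine setLIntegral_mono_ae ?_ ?_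
    · exact (Antitone.measurable (fun l l' hll' => measure_mono
        (fun x (hx : l' < ‖u x‖) => lt_of_le_of_lt hll' hx))).aemeasurable
    · exact Filter.Eventually.of_forall fun l hl => restrict_meas_le hl
  refine step.trans ?_
  have hnorm_nn : 0 ≤ᵐ[μ] fun x => ‖u x‖ := Filter.Eventually.of_forall fun x => norm_nonneg _
  have := (lintegral_eq_lintegral_meas_lt μ hnorm_nn hu.1.aemeasurable.norm).symm
  rw [this]
  refine le_of_eq (lintegral_congr fun x => ?_)
  exact ofReal_norm _




lemma eLpNormTop_ne_top {v : X → ℂ} (hv : MemLp v ⊤ μ) : eLpNorm v ⊤ μ ≠ ⊤ := hv.2.ne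

lemma rearr_add_le {f u v : X → ℂ} (hfuv : f = u + v) (hu : MemLp u 1 μ) (hv : MemLp v ⊤ μ)
    {t : ℝ} (ht : 0 < t) :
    rearr μ f t ≤ rearr μ u t + (eLpNorm v ⊤ μ).toReal := by
  set A := (eLpNorm v ⊤ μ).toReal with hA
  have hA0 : 0 ≤ A := ENNReal.toReal_nonneg
  have hS := S_nonempty_of_L1 hu ht
  have key : ∀ l ∈ S μ u t, rearr μ f t - A ≤ l := by
    rintro l ⟨hl0, hld⟩
    have h1 : μ {x | l + A < ‖f x‖} ≤ ENNReal.ofReal t :=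
      le_trans (meas_add_le hfuv (ae_norm_le hv)) hld
    have := rearr_le (by positivity) h1
    linarith
  have := le_csInf hS key
  have hrfl : rearr μ u t = sInf (S μ u t) := rfl
  linarith [this, hrfl ▸ this]

lemma lintegral_Ioo_rearr_le {f u v : X → ℂ} (hfuv : f = u + v)
    (hu : MemLp u 1 μ) (hv : MemLp v ⊤ μ) :
    ∫⁻ t in Ioo (0:ℝ) 1, ENNReal.ofReal (rearr μ f t) ≤ eLpNorm u 1 μ + eLpNorm v ⊤ μ := by
  set A := (eLpNorm v ⊤ μ).toReal with hA
  have hA0 : 0 ≤ A := ENNReal.toReal_nonneg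
  have step1 : ∫⁻ t in Ioo (0:ℝ) 1, ENNReal.ofReal (rearr μ f t)
      ≤ ∫⁻ t in Ioo (0:ℝ) 1, (ENNReal.ofReal (rearr μ u t) + ENNReal.ofReal A) := by
    refine lintegral_mono_ae ?_
    rw [ae_restrict_iff' measurableSet_Ioo]
    refine Filter.Eventually.of_forall fun t ht => ?_
    calc ENNReal.ofReal (rearr μ f t) ≤ ENNReal.ofReal (rearr μ u t + A) :=
          ENNReal.ofReal_le_ofReal (rearr_add_le hfuv hu hv ht.1)
      _ = _ := ENNReal.ofReal_add (rearr_nonneg u t) hA0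
  refine step1.trans ?_
  rw [lintegral_add_right _ measurable_const]
  have h2 : ∫⁻ t in Ioo (0:ℝ) 1, ENNReal.ofReal (rearr μ u t) ≤ eLpNorm u 1 μ := by
    calc ∫⁻ t in Ioo (0:ℝ) 1, ENNReal.ofReal (rearr μ u t)
        ≤ ∫⁻ t in Ioi (0:ℝ), ENNReal.ofReal (rearr μ u t) :=
          lintegral_mono_set Ioo_subset_Ioi_self
      _ ≤ ∫⁻ x, (‖u x‖₊ : ℝ≥0∞) ∂μ := lintegral_rearr_le hu
      _ = eLpNorm u 1 μ := (eLpNorm_one_eq_lintegral_enorm (f := u) (μ := μ)).symm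
  have h3 : ∫⁻ _ in Ioo (0:ℝ) 1, ENNReal.ofReal A = ENNReal.ofReal A := by
    rw [setLIntegral_const, Real.volume_Ioo]
    simp
  rw [h3]
  exact add_le_add h2 (by rw [hA, ENNReal.ofReal_toReal (eLpNormTop_ne_top hv)])



lemma lintegral_scale (F : ℝ → ℝ≥0∞) (hF : Measurable F) {c : ℝ} (hc : 0 < c) :
    ∫⁻ l in Ioi (0:ℝ), F (c * l) = ENNReal.ofReal c⁻¹ * ∫⁻ u in Ioi (0:ℝ), F u := by
  have hpre : ((c * ·) : ℝ → ℝ) ⁻¹' Ioi 0 = Ioi 0 := by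
    ext l
    simp only [mem_preimage, mem_Ioi]
    constructor
    · intro h
      by_contra hl
      push_neg at hl
      nlinarith
    · intro h; positivity
  have hmap : Measure.map ((c * ·) : ℝ → ℝ) (volume.restrict (Ioi (0:ℝ)))
      = (ENNReal.ofReal c⁻¹) • (volume.restrict (Ioi (0:ℝ))) := by
    calc Measure.map ((c * ·) : ℝ → ℝ) (volume.restrict (Ioi (0:ℝ)))
        = Measure.map ((c * ·) : ℝ → ℝ) (volume.restrict (((c * ·) : ℝ → ℝ) ⁻¹' Ioi (0:ℝ))) := by
          rw [hpre]
      _ = (Measure.map ((c * ·) : ℝ → ℝ) volume).restrict (Ioi (0:ℝ)) :=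
          (Measure.restrict_map (measurable_const_mul c) measurableSet_Ioi).symm
      _ = (ENNReal.ofReal c⁻¹) • (volume.restrict (Ioi (0:ℝ))) := by
          rw [Real.map_volume_mul_left hc.ne', abs_of_pos (inv_pos.mpr hc),
            Measure.restrict_smul]
  calc ∫⁻ l in Ioi (0:ℝ), F (c * l)
      = ∫⁻ u, F u ∂(Measure.map ((c * ·) : ℝ → ℝ) (volume.restrict (Ioi (0:ℝ)))) :=
        (lintegral_map hF (measurable_const_mul c)).symm
    _ = ENNReal.ofReal c⁻¹ * ∫⁻ u in Ioi (0:ℝ), F u := by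
        rw [hmap, lintegral_smul_measure, smul_eq_mul]




lemma J_le_LHSd {g : X → ℂ} (hg : Measurable g)
    (hS : ∀ t : ℝ, 0 < t → (S μ g t).Nonempty) :
    ∫⁻ x, ENNReal.ofReal (max (‖g x‖ - rearr μ g 1) 0) ∂μ
      ≤ ∫⁻ t in Ioo (0:ℝ) 1, ENNReal.ofReal (rearr μ g t - rearr μ g 1) := by
  set a := rearr μ g 1 with ha
  have ha0 : 0 ≤ a := rearr_nonneg g 1
  set F : ℝ → ℝ≥0∞ := fun l => μ {x | a + l < ‖g x‖} with hF
  have hFmeas : Measurable F := by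
    refine Antitone.measurable fun l l' hll' => ?_
    exact measure_mono fun x (hx : a + l' < ‖g x‖) => lt_of_le_of_lt (by linarith) hx
  -- Step A1 : J = ∫⁻_{l>0} F l
  have hA1 : ∫⁻ x, ENNReal.ofReal (max (‖g x‖ - a) 0) ∂μ = ∫⁻ l in Ioi (0:ℝ), F l := by
    have hnn : 0 ≤ᵐ[μ] fun x => max (‖g x‖ - a) 0 :=
      Filter.Eventually.of_forall fun x => le_max_right _ _
    have hmble : AEMeasurable (fun x => max (‖g x‖ - a) 0) μ :=
      ((hg.norm.sub measurable_const).max measurable_const).aemeasurable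
    rw [lintegral_eq_lintegral_meas_lt μ hnn hmble]
    refine setLIntegral_congr_fun measurableSet_Ioi
      (fun l hl => ?_)
    have : {x | l < max (‖g x‖ - a) 0} = {x | a + l < ‖g x‖} := by
      ext x
      simp only [mem_setOf_eq, lt_max_iff]
      constructor
      · rintro (h | h)
        · linarith
        · exact absurd hl (not_lt.mpr h.le)
      · intro h; left; linarith
    rw [this]
  -- Step A2 : LHSd = ∫⁻_{l>0} (restricted vol of superlevel)
  have hA2 : ∫⁻ t in Ioo (0:ℝ) 1, ENNReal.ofReal (rearr μ g t - a)
      = ∫⁻ l in Ioi (0:ℝ), (volume.restrict (Ioo (0:ℝ) 1)) {t : ℝ | l < rearr μ g t - a} := by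
    have hnn : 0 ≤ᵐ[volume.restrict (Ioo (0:ℝ) 1)] fun t => rearr μ g t - a := by
      refine (ae_restrict_iff' measurableSet_Ioo).mpr
        (Filter.Eventually.of_forall fun t ht => ?_)
      have := rearr_anti (hS t ht.1) ht.2.le
      simp only [Pi.zero_apply]
      linarith
    have hmble : AEMeasurable (fun t => rearr μ g t - a) (volume.restrict (Ioo (0:ℝ) 1)) := by
      refine AEMeasurable.sub ?_ aemeasurable_const
      refine aemeasurable_restrict_of_antitoneOn measurableSet_Ioo ?_
      intro t ht t' _ htt'
      exact rearr_anti (hS t ht.1) htt'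
    exact lintegral_eq_lintegral_meas_lt _ hnn hmble
  -- Step A3 : pointwise lower bound with scaling c > 1
  have hA3 : ∀ c : ℝ, 1 < c → ∀ l : ℝ, l ∈ Ioi (0:ℝ) →
      F (c * l) ≤ (volume.restrict (Ioo (0:ℝ) 1)) {t : ℝ | l < rearr μ g t - a} := by
    intro c hc l hl
    set D := F (c * l) with hD
    have hsub : {t : ℝ | ENNReal.ofReal t < D} ∩ Ioi 0 ⊆ {t : ℝ | l < rearr μ g t - a} := by
      rintro t ⟨htD, ht0⟩
      have hl0 : (0:ℝ) < l := hl
      have hle : a + c * l ≤ rearr μ g t := le_rearr (hS t ht0) htD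
      have : l < rearr μ g t - a := by nlinarith
      exact this
    have hsub2 : {t : ℝ | ENNReal.ofReal t < D} ∩ Ioi 0 ⊆ Ioo (0:ℝ) 1 := by
      rintro t ⟨htD, ht0⟩
      refine ⟨ht0, ?_⟩
      by_contra h1
      push_neg at h1
      have h2 : rearr μ g t ≤ a := rearr_anti (hS 1 one_pos) h1
      have hle : a + c * l ≤ rearr μ g t := le_rearr (hS t ht0) htD
      have hl0 : (0:ℝ) < l := hl
      nlinarith
    have hmeas1 : MeasurableSet {t : ℝ | ENNReal.ofReal t < D} :=
      measurableSet_lt ENNReal.measurable_ofReal measurable_const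
    have hmeasset : MeasurableSet ({t : ℝ | ENNReal.ofReal t < D} ∩ Ioi (0:ℝ)) :=
      hmeas1.inter measurableSet_Ioi
    calc D = (volume.restrict (Ioi (0:ℝ))) {t : ℝ | ENNReal.ofReal t < D} := (vol_lt D).symm
      _ = volume ({t : ℝ | ENNReal.ofReal t < D} ∩ Ioi (0:ℝ)) := by
          rw [Measure.restrict_apply hmeas1]
      _ = (volume.restrict (Ioo (0:ℝ) 1)) ({t : ℝ | ENNReal.ofReal t < D} ∩ Ioi (0:ℝ)) := by
          rw [Measure.restrict_apply hmeasset, inter_eq_self_of_subset_left hsub2]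
      _ ≤ (volume.restrict (Ioo (0:ℝ) 1)) {t : ℝ | l < rearr μ g t - a} :=
          measure_mono hsub
  -- Step A4+A5 : combine
  rw [hA1, hA2]
  set L := ∫⁻ l in Ioi (0:ℝ), (volume.restrict (Ioo (0:ℝ) 1)) {t : ℝ | l < rearr μ g t - a}
    with hL
  set J := ∫⁻ l in Ioi (0:ℝ), F l with hJ
  have key : ∀ c : ℝ, 1 < c → ENNReal.ofReal c⁻¹ * J ≤ L := by
    intro c hc
    have h1 : ∫⁻ l in Ioi (0:ℝ), F (c * l) ≤ L := by
      refine lintegral_mono_ae ?_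
      rw [ae_restrict_iff' measurableSet_Ioi]
      exact Filter.Eventually.of_forall fun l hl => hA3 c hc l hl
    rwa [lintegral_scale F hFmeas (lt_trans one_pos hc)] at h1
  -- conclude J ≤ L
  have htend : Tendsto (fun n : ℕ => ENNReal.ofReal ((1 + 1/(n+1) : ℝ))⁻¹ * J) atTop (𝓝 J) := by
    have h1 : Tendsto (fun n : ℕ => ((1 + 1/(n+1) : ℝ))⁻¹) atTop (𝓝 1) := by
      have : Tendsto (fun n : ℕ => (1 + 1/(n+1) : ℝ)) atTop (𝓝 1) := by
        have : Tendsto (fun n : ℕ => 1 / ((n : ℝ) + 1)) atTop (𝓝 0) := tendsto_one_div_add_atTop_nhds_zero_nat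
        simpa using (tendsto_const_nhds (x := (1:ℝ))).add this
      simpa using this.inv₀ (by norm_num)
    have h2 : Tendsto (fun n : ℕ => ENNReal.ofReal ((1 + 1/(n+1) : ℝ))⁻¹) atTop (𝓝 1) := by
      have := (ENNReal.continuous_ofReal.tendsto 1).comp h1
      rwa [ENNReal.ofReal_one] at this
    simpa using ENNReal.Tendsto.mul_const h2 (Or.inl one_ne_zero)
  refine le_of_tendsto htend (Filter.Eventually.of_forall fun n => ?_)
  refine key _ ?_
  have : (0:ℝ) < 1/(n+1) := by positivity
  linarith




lemma S_nonempty_of_mem {g : X → ℂ} (hmem : MemL1Linf μ g) {t : ℝ} (ht : 0 < t) :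
    (S μ g t).Nonempty := by
  obtain ⟨u, v, huv, hu, hv⟩ := hmem
  obtain ⟨m, hm0, hmle⟩ := markov hu ht
  set A := (eLpNorm v ⊤ μ).toReal with hA
  have hA0 : 0 ≤ A := ENNReal.toReal_nonneg
  refine ⟨m + A, by positivity, ?_⟩
  calc μ {x | m + A < ‖g x‖} ≤ μ {x | m < ‖u x‖} := meas_add_le huv (ae_norm_le hv)
    _ ≤ μ {x | m ≤ ‖u x‖} := measure_mono fun x (hx : m < ‖u x‖) => le_of_lt hx
    _ ≤ ENNReal.ofReal t := hmle

lemma I_ne_top {g : X → ℂ} (hmem : MemL1Linf μ g) :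
    ∫⁻ t in Ioo (0:ℝ) 1, ENNReal.ofReal (rearr μ g t) ≠ ⊤ := by
  obtain ⟨u, v, huv, hu, hv⟩ := hmem
  exact ne_top_of_le_ne_top (ENNReal.add_ne_top.mpr ⟨hu.2.ne, hv.2.ne⟩)
    (lintegral_Ioo_rearr_le huv hu hv)

lemma integral_rearr_eq {g : X → ℂ} (hmem : MemL1Linf μ g) :
    ∫ t in Ioo (0:ℝ) 1, rearr μ g t
      = (∫⁻ t in Ioo (0:ℝ) 1, ENNReal.ofReal (rearr μ g t)).toReal := by
  refine integral_eq_lintegral_of_nonneg_ae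
    (Filter.Eventually.of_forall fun t => rearr_nonneg g t) ?_
  refine AEMeasurable.aestronglyMeasurable ?_
  refine aemeasurable_restrict_of_antitoneOn measurableSet_Ioo ?_
  intro t ht t' _ htt'
  exact rearr_anti (S_nonempty_of_mem hmem ht.1) htt'

lemma integral_rearr_le_sumNorm {g : X → ℂ} (hmem : MemL1Linf μ g) :
    ∫ t in Ioo (0:ℝ) 1, rearr μ g t ≤ sumNorm μ g := by
  rw [integral_rearr_eq hmem]
  refine le_csInf ?_ ?_
  · obtain ⟨u, v, huv, hu, hv⟩ := hmem
    exact ⟨_, u, v, huv, hu, hv, rfl⟩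
  · rintro r ⟨u, v, huv, hu, hv, rfl⟩
    have h1 := lintegral_Ioo_rearr_le huv hu hv
    have h2 : (eLpNorm u 1 μ + eLpNorm v ⊤ μ) ≠ ⊤ := ENNReal.add_ne_top.mpr ⟨hu.2.ne, hv.2.ne⟩
    calc (∫⁻ t in Ioo (0:ℝ) 1, ENNReal.ofReal (rearr μ g t)).toReal
        ≤ (eLpNorm u 1 μ + eLpNorm v ⊤ μ).toReal := ENNReal.toReal_mono h2 h1
      _ = _ := ENNReal.toReal_add hu.2.ne hv.2.ne




lemma sumNorm_le_integral {g : X → ℂ} (hg : Measurable g) (hmem : MemL1Linf μ g) :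
    sumNorm μ g ≤ ∫ t in Ioo (0:ℝ) 1, rearr μ g t := by
  have hS : ∀ t : ℝ, 0 < t → (S μ g t).Nonempty := fun t ht => S_nonempty_of_mem hmem ht
  set a := rearr μ g 1 with ha
  have ha0 : 0 ≤ a := rearr_nonneg g 1
  set gi : X → ℂ := fun x => if ‖g x‖ ≤ a then g x else ((a / ‖g x‖ : ℝ) : ℂ) * g x with hgi
  set g1 : X → ℂ := fun x => g x - gi x with hg1
  have hgimeas : Measurable gi := by
    refine Measurable.ite (measurableSet_le hg.norm measurable_const) hg ?_
    exact (Complex.measurable_ofReal.comp (measurable_const.div hg.norm)).mul hg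
  have hginorm : ∀ x, ‖gi x‖ = min ‖g x‖ a := by
    intro x
    by_cases hx : ‖g x‖ ≤ a
    · rw [show gi x = g x from if_pos hx, min_eq_left hx]
    · push_neg at hx
      have hn0 : (0:ℝ) < ‖g x‖ := lt_of_le_of_lt ha0 hx
      rw [show gi x = ((a / ‖g x‖ : ℝ) : ℂ) * g x from if_neg (not_le.mpr hx)]
      rw [norm_mul, Complex.norm_real, Real.norm_eq_abs, abs_of_nonneg (by positivity),
        min_eq_right hx.le, div_mul_cancel₀ _ hn0.ne']
  have hg1norm : ∀ x, ‖g1 x‖ = max (‖g x‖ - a) 0 := by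
    intro x
    by_cases hx : ‖g x‖ ≤ a
    · have : g1 x = 0 := by
        show g x - gi x = 0
        rw [show gi x = g x from if_pos hx, sub_self]
      rw [this, norm_zero, max_eq_right (by linarith : ‖g x‖ - a ≤ 0)]
    · push_neg at hx
      have hn0 : (0:ℝ) < ‖g x‖ := lt_of_le_of_lt ha0 hx
      have : g1 x = ((1 - a / ‖g x‖ : ℝ) : ℂ) * g x := by
        show g x - gi x = _
        rw [show gi x = ((a / ‖g x‖ : ℝ) : ℂ) * g x from if_neg (not_le.mpr hx)]
        push_cast
        ring
      rw [this, norm_mul, Complex.norm_real, Real.norm_eq_abs,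
        abs_of_nonneg (by rw [sub_nonneg]; exact (div_le_one hn0).mpr hx.le),
        max_eq_left (by linarith : (0:ℝ) ≤ ‖g x‖ - a)]
      rw [sub_mul, one_mul, div_mul_cancel₀ _ hn0.ne']
  -- bounds
  set J := ∫⁻ x, ENNReal.ofReal (max (‖g x‖ - a) 0) ∂μ with hJ
  set I := ∫⁻ t in Ioo (0:ℝ) 1, ENNReal.ofReal (rearr μ g t) with hI
  have hIne : I ≠ ⊤ := I_ne_top hmem
  have hkey : J + ENNReal.ofReal a ≤ I := by
    have h1 : J ≤ ∫⁻ t in Ioo (0:ℝ) 1, ENNReal.ofReal (rearr μ g t - a) := J_le_LHSd hg hS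
    have h2 : (∫⁻ t in Ioo (0:ℝ) 1, ENNReal.ofReal (rearr μ g t - a)) + ENNReal.ofReal a
        = I := by
      have hconst : ∫⁻ _ in Ioo (0:ℝ) 1, ENNReal.ofReal a = ENNReal.ofReal a := by
        rw [setLIntegral_const, Real.volume_Ioo]
        simp
      rw [hI, ← hconst, ← lintegral_add_right _ measurable_const]
      refine setLIntegral_congr_fun measurableSet_Ioo
        (fun t ht => ?_)
      have hta : a ≤ rearr μ g t := by
        rw [ha]; exact rearr_anti (hS t ht.1) ht.2.le
      rw [← ENNReal.ofReal_add (by linarith) ha0, sub_add_cancel]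
    calc J + ENNReal.ofReal a
        ≤ (∫⁻ t in Ioo (0:ℝ) 1, ENNReal.ofReal (rearr μ g t - a)) + ENNReal.ofReal a :=
          add_le_add_left h1 _
      _ = I := h2
  have hJne : J ≠ ⊤ := by
    refine ne_top_of_le_ne_top hIne (le_trans ?_ hkey)
    exact le_add_right le_rfl
  -- MemLp facts
  have hgibd : ∀ᵐ x ∂μ, ‖gi x‖ ≤ a :=
    Filter.Eventually.of_forall fun x => (hginorm x) ▸ min_le_right _ _
  have hgimem : MemLp gi ⊤ μ := memLp_top_of_bound hgimeas.aestronglyMeasurable a hgibd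
  have hgitop : (eLpNorm gi ⊤ μ).toReal ≤ a := by
    have h1 : eLpNorm gi ⊤ μ ≤ ENNReal.ofReal a := by
      rw [eLpNorm_exponent_top]
      exact eLpNormEssSup_le_of_ae_bound hgibd
    calc (eLpNorm gi ⊤ μ).toReal ≤ (ENNReal.ofReal a).toReal :=
        ENNReal.toReal_mono ENNReal.ofReal_ne_top h1
      _ = a := ENNReal.toReal_ofReal ha0
  have hg1meas : Measurable g1 := hg.sub hgimeas
  have hg1snorm : eLpNorm g1 1 μ = J := by
    rw [eLpNorm_one_eq_lintegral_enorm, hJ]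
    refine lintegral_congr fun x => ?_
    rw [← ofReal_norm, hg1norm x]
  have hg1mem : MemLp g1 1 μ := by
    refine ⟨hg1meas.aestronglyMeasurable, ?_⟩
    rw [hg1snorm]
    exact lt_top_iff_ne_top.mpr hJne
  -- conclude
  have hdecomp : g = g1 + gi := by
    funext x
    simp [hg1]
  have hmemset : (eLpNorm g1 1 μ).toReal + (eLpNorm gi ⊤ μ).toReal ∈
      {r : ℝ | ∃ u v, g = u + v ∧ MemLp u 1 μ ∧ MemLp v ⊤ μ ∧
        r = (eLpNorm u 1 μ).toReal + (eLpNorm v ⊤ μ).toReal} :=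
    ⟨g1, gi, hdecomp, hg1mem, hgimem, rfl⟩
  have hbdd : BddBelow {r : ℝ | ∃ u v, g = u + v ∧ MemLp u 1 μ ∧ MemLp v ⊤ μ ∧
      r = (eLpNorm u 1 μ).toReal + (eLpNorm v ⊤ μ).toReal} := by
    refine ⟨0, ?_⟩
    rintro r ⟨u, v, _, _, _, rfl⟩
    positivity
  calc sumNorm μ g ≤ (eLpNorm g1 1 μ).toReal + (eLpNorm gi ⊤ μ).toReal :=
        csInf_le hbdd hmemset
    _ ≤ J.toReal + a := by
        rw [hg1snorm]
        linarith [hgitop]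
    _ = (J + ENNReal.ofReal a).toReal := by
        rw [ENNReal.toReal_add hJne ENNReal.ofReal_ne_top, ENNReal.toReal_ofReal ha0]
    _ ≤ I.toReal := ENNReal.toReal_mono hIne hkey
    _ = ∫ t in Ioo (0:ℝ) 1, rearr μ g t := (integral_rearr_eq hmem).symm



lemma locConv_of_au {h : ℕ → X → ℂ} {h₀ : X → ℂ}
    (hau : ∀ ε > (0 : ℝ), ∃ E : Set X, MeasurableSet E ∧ μ Eᶜ ≤ ENNReal.ofReal ε ∧
      TendstoUniformlyOn h h₀ atTop E) :
    LocConvMeasure μ h h₀ := by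
  intro A _ _ δ hδ
  rw [ENNReal.tendsto_atTop_zero]
  intro ε hε
  obtain ⟨ε', hε'0, hε'le⟩ : ∃ ε' : ℝ, 0 < ε' ∧ ENNReal.ofReal ε' ≤ ε := by
    rcases eq_or_ne ε ⊤ with rfl | hne
    · exact ⟨1, one_pos, le_top⟩
    · refine ⟨ε.toReal, ENNReal.toReal_pos hε.ne' hne, ?_⟩
      rw [ENNReal.ofReal_toReal hne]
  obtain ⟨E, _, hEc, hunif⟩ := hau ε' hε'0
  have hev : ∀ᶠ n in atTop, ∀ x ∈ E, dist (h₀ x) (h n x) < δ :=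
    (Metric.tendstoUniformlyOn_iff.mp hunif) δ hδ
  rw [eventually_atTop] at hev
  obtain ⟨N, hN⟩ := hev
  refine ⟨N, fun n hn => ?_⟩
  have hsub : {x | x ∈ A ∧ δ ≤ ‖h n x - h₀ x‖} ⊆ Eᶜ := by
    rintro x ⟨_, hxd⟩ hxE
    have := hN n hn x hxE
    rw [dist_comm, dist_eq_norm] at this
    exact absurd hxd (not_le.mpr this)
  exact le_trans (measure_mono hsub) (hEc.trans hε'le)


end Au

/-- If `h_n ≺≺ f` for all `n` and `h_n → h` almost uniformly, and the (scaled) unit balls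
of `L¹ + L^∞` are closed under local convergence in measure, then `h ∈ L¹ + L^∞` with
`‖h‖_{L¹+L^∞} ≤ ‖f‖_{L¹+L^∞}`. -/
theorem au_limit_of_submajorized {X : Type*} [MeasurableSpace X]
    (μ : Measure X) [SigmaFinite μ]
    (f : X → ℂ) (hf : Measurable f) (hfmem : MemL1Linf μ f)
    (hfR : Tendsto (rearr μ f) atTop (𝓝 0))
    (h : ℕ → X → ℂ) (hhmeas : ∀ n, Measurable (h n))
    (hhmem : ∀ n, MemL1Linf μ (h n))
    (hsub : ∀ n, ∀ s : ℝ, 0 < s →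
      ∫ t in Set.Ioo (0 : ℝ) s, rearr μ (h n) t ≤ ∫ t in Set.Ioo (0 : ℝ) s, rearr μ f t)
    (h₀ : X → ℂ) (hh₀ : Measurable h₀)
    (hau : ∀ ε > (0 : ℝ), ∃ E : Set X, MeasurableSet E ∧ μ Eᶜ ≤ ENNReal.ofReal ε ∧
      TendstoUniformlyOn h h₀ atTop E)
    (hball : ∀ (r : ℝ) (g : ℕ → X → ℂ) (g₀ : X → ℂ),
      (∀ n, MemL1Linf μ (g n) ∧ sumNorm μ (g n) ≤ r) → Measurable g₀ →
      LocConvMeasure μ g g₀ → MemL1Linf μ g₀ ∧ sumNorm μ g₀ ≤ r) :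
    MemL1Linf μ h₀ ∧ sumNorm μ h₀ ≤ sumNorm μ f := by
  refine hball (sumNorm μ f) h h₀ (fun n => ⟨hhmem n, ?_⟩) hh₀ (Au.locConv_of_au hau)
  calc sumNorm μ (h n) ≤ ∫ t in Set.Ioo (0:ℝ) 1, rearr μ (h n) t :=
        Au.sumNorm_le_integral (hhmeas n) (hhmem n)
    _ ≤ ∫ t in Set.Ioo (0:ℝ) 1, rearr μ f t := hsub n 1 one_pos
    _ ≤ sumNorm μ f := Au.integral_rearr_le_sumNorm hfmem
end

section
/- Let T be a positive Dunford–Schwartz operator on L¹ + L^∞ of a σ-finite measure space, (β_k) a bounded Besicovitch sequence, and f ∈ L¹ + L^∞ with μ_t(f) → 0 as t → ∞. Assuming the Besicovitch-weighted ergodic theorem holds for all g ∈ L¹ (i.e., (1/n) Σ_{k=0}^{n−1} β_k T^k g converges almost uniformly for g ∈ L¹), the weighted averages B_n(f) = (1/n) Σ_{k=0}^{n−1} β_k T^k f converge almost uniformly to some f̂ ∈ L¹ + L^∞. -/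
open MeasureTheory Filter Topology
open scoped ENNReal NNReal

/-- A trigonometric polynomial sequence. -/
def IsTrigPoly (P : ℕ → ℂ) : Prop :=
  ∃ (s : ℕ) (z : Fin s → ℂ) (l : Fin s → ℂ),
    (∀ j, ‖l j‖ = 1) ∧ ∀ k, P k = ∑ j, z j * l j ^ k

/-- A bounded Besicovitch sequence. -/
def IsBesicovitch (β : ℕ → ℂ) : Prop :=
  (∃ C : ℝ, ∀ k, ‖β k‖ ≤ C) ∧
  ∀ ε > (0 : ℝ), ∃ P : ℕ → ℂ, IsTrigPoly P ∧
    limsup (fun n : ℕ => (1 / (n + 1 : ℝ)) * ∑ k ∈ Finset.range (n + 1), ‖β k - P k‖)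
      atTop < ε

/-- Almost uniform hypotheses imply a.e. -/
lemma ae_of_au {X : Type*} [MeasurableSpace X] {μ : Measure X} {Q : X → Prop}
    (h : ∀ ε > (0:ℝ), ∃ E : Set X, MeasurableSet E ∧ μ Eᶜ ≤ ENNReal.ofReal ε ∧ ∀ x ∈ E, Q x) :
    ∀ᵐ x ∂μ, Q x := by
  choose E hEm hEμ hEQ using fun j : ℕ => h (1/(j+1)) (by positivity)
  have hsub : {x | ¬ Q x} ⊆ (⋃ j, E j)ᶜ := by
    intro x hx
    simp only [Set.mem_compl_iff, Set.mem_iUnion, not_exists]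
    exact fun j hj => hx (hEQ j x hj)
  have htend : Tendsto (fun j : ℕ => ENNReal.ofReal (1/(j+1:ℝ))) atTop (𝓝 0) := by
    have := ENNReal.tendsto_ofReal (tendsto_one_div_add_atTop_nhds_zero_nat)
    simpa using this
  have h0 : μ (⋃ j, E j)ᶜ = 0 := by
    refine le_antisymm (ge_of_tendsto' htend fun j => ?_) (by simp)
    exact le_trans (measure_mono (Set.compl_subset_compl.2 (Set.subset_iUnion E j))) (hEμ j)
  rw [ae_iff]
  exact measure_mono_null hsub h0

/-- iterate facts -/
lemma iter_facts {X : Type*} [MeasurableSpace X] (μ : Measure X)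
    (T : (X → ℂ) → (X → ℂ))
    (hadd : ∀ f g : X → ℂ, MemL1Linf μ f → MemL1Linf μ g → T (f + g) = T f + T g)
    (hL1 : ∀ f : X → ℂ, MemLp f 1 μ → MemLp (T f) 1 μ ∧ eLpNorm (T f) 1 μ ≤ eLpNorm f 1 μ)
    (hLinf : ∀ f : X → ℂ, MemLp f ⊤ μ → MemLp (T f) ⊤ μ ∧ eLpNorm (T f) ⊤ μ ≤ eLpNorm f ⊤ μ)
    (g h : X → ℂ) (hg : MemLp g 1 μ) (hh : MemLp h ⊤ μ) (k : ℕ) :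
    T^[k] (g + h) = T^[k] g + T^[k] h ∧ MemLp (T^[k] g) 1 μ ∧ MemLp (T^[k] h) ⊤ μ ∧
      eLpNorm (T^[k] g) 1 μ ≤ eLpNorm g 1 μ ∧ eLpNorm (T^[k] h) ⊤ μ ≤ eLpNorm h ⊤ μ := by
  induction k with
  | zero => simpa using ⟨hg, hh⟩
  | succ k ih =>
    obtain ⟨heq, hg', hh', hg'', hh''⟩ := ih
    have m1 : MemL1Linf μ (T^[k] g) := ⟨T^[k] g, 0, by simp, hg', MemLp.zero⟩
    have m2 : MemL1Linf μ (T^[k] h) := ⟨0, T^[k] h, by simp, MemLp.zero, hh'⟩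
    simp only [Function.iterate_succ_apply']
    refine ⟨?_, (hL1 _ hg').1, (hLinf _ hh').1, le_trans (hL1 _ hg').2 hg'',
      le_trans (hLinf _ hh').2 hh''⟩
    rw [heq, hadd _ _ m1 m2]

/-- decomposition with small L∞ part -/
lemma decomp {X : Type*} [MeasurableSpace X] {μ : Measure X} {f : X → ℂ}
    (hf : Measurable f) (hmem : MemL1Linf μ f) (hR : Tendsto (rearr μ f) atTop (𝓝 0))
    {δ : ℝ} (hδ : 0 < δ) :
    ∃ g h : X → ℂ, f = g + h ∧ MemLp g 1 μ ∧ MemLp h ⊤ μ ∧ ∀ x, ‖h x‖ ≤ δ := by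
  obtain ⟨a, b, hab, ha, hb⟩ := hmem
  set M : ℝ := (eLpNorm b ⊤ μ).toReal with hMdef
  have hM0 : 0 ≤ M := ENNReal.toReal_nonneg
  have hbfin : eLpNorm b ⊤ μ ≠ ⊤ := hb.2.ne
  have hbae : ∀ᵐ x ∂μ, ‖b x‖ ≤ M := by
    filter_upwards [ae_le_eLpNormEssSup (f := b) (μ := μ)] with x hx
    have h2 := ENNReal.toReal_mono (by rwa [eLpNorm_exponent_top] at hbfin) hx
    simpa [hMdef, eLpNorm_exponent_top] using h2
  -- the set where ‖f‖ is large has finite measure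
  have hKa : μ {x | 1 ≤ (‖a x‖₊ : ℝ≥0∞)} < ⊤ := by
    have h1 := mul_meas_ge_le_lintegral₀ (ha.1.enorm) 1
    have h2 : (∫⁻ x, (‖a x‖₊ : ℝ≥0∞) ∂μ) < ⊤ := by
      simp only [← enorm_eq_nnnorm]; rw [← eLpNorm_one_eq_lintegral_enorm]; exact ha.2
    simpa using lt_of_le_of_lt (by simpa [enorm_eq_nnnorm] using h1) h2
  have hbnull : μ {x | M < ‖b x‖} = 0 := by
    have := ae_iff.1 hbae
    simpa [not_le] using this
  have hKf : μ {x | M + 1 < ‖f x‖} < ⊤ := by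
    have hsub : {x | M + 1 < ‖f x‖} ⊆ {x | 1 ≤ (‖a x‖₊ : ℝ≥0∞)} ∪ {x | M < ‖b x‖} := by
      intro x hx
      by_cases hbx : M < ‖b x‖
      · exact Or.inr hbx
      · left
        push_neg at hbx
        have hfx : ‖f x‖ ≤ ‖a x‖ + ‖b x‖ := by
          rw [hab]; exact norm_add_le _ _
        have h1 : (1:ℝ) ≤ ‖a x‖ := by
          have : M + 1 < ‖a x‖ + M := lt_of_lt_of_le hx (le_trans hfx (by linarith))
          linarith
        simpa using ENNReal.one_le_coe_iff.2 (by rw [← NNReal.coe_le_coe]; simpa using h1)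
    calc μ {x | M + 1 < ‖f x‖} ≤ μ ({x | 1 ≤ (‖a x‖₊ : ℝ≥0∞)} ∪ {x | M < ‖b x‖}) :=
          measure_mono hsub
      _ ≤ μ {x | 1 ≤ (‖a x‖₊ : ℝ≥0∞)} + μ {x | M < ‖b x‖} := measure_union_le _ _
      _ < ⊤ := by rw [hbnull]; simpa using hKa
  -- choose a level l < δ with finite superlevel measure
  have hfin : μ {x | δ < ‖f x‖} < ⊤ := by
    obtain ⟨t, ht1, ht2⟩ :=
      ((hR.eventually_lt_const hδ).and (eventually_ge_atTop (μ {x | M + 1 < ‖f x‖}).toReal)).exists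
    have hne : (M+1) ∈ {l : ℝ | 0 < l ∧ μ {x | l < ‖f x‖} ≤ ENNReal.ofReal t} := by
      refine ⟨by linarith, ?_⟩
      calc μ {x | M + 1 < ‖f x‖} = ENNReal.ofReal (μ {x | M + 1 < ‖f x‖}).toReal :=
            (ENNReal.ofReal_toReal hKf.ne).symm
        _ ≤ ENNReal.ofReal t := ENNReal.ofReal_le_ofReal ht2
    have hbdd : BddBelow {l : ℝ | 0 < l ∧ μ {x | l < ‖f x‖} ≤ ENNReal.ofReal t} :=
      ⟨0, fun l hl => hl.1.le⟩
    obtain ⟨l, ⟨hl0, hlm⟩, hlδ⟩ := (csInf_lt_iff hbdd ⟨_, hne⟩).1 ht1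
    exact lt_of_le_of_lt
      (le_trans (measure_mono fun x hx => lt_trans hlδ hx) hlm) ENNReal.ofReal_lt_top
  -- indicator decomposition
  set s := {x | δ < ‖f x‖} with hs
  have ms : MeasurableSet s := measurableSet_lt measurable_const hf.norm
  have hscomp : ∀ x, ‖sᶜ.indicator f x‖ ≤ δ := by
    intro x
    by_cases hx : x ∈ sᶜ
    · rw [Set.indicator_of_mem hx]
      have := hx
      simp only [Set.mem_compl_iff, hs, Set.mem_setOf_eq, not_lt] at this
      exact this
    · rw [Set.indicator_of_notMem hx]; simpa using hδ.le
  refine ⟨s.indicator f, sᶜ.indicator f, (Set.indicator_self_add_compl s f).symm, ?_, ?_, hscomp⟩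
  · refine ⟨(hf.indicator ms).aestronglyMeasurable, ?_⟩
    rw [eLpNorm_one_eq_lintegral_enorm]; simp only [enorm_eq_nnnorm]
    have heq : ∫⁻ x, (‖s.indicator f x‖₊ : ℝ≥0∞) ∂μ = ∫⁻ x in s, (‖f x‖₊ : ℝ≥0∞) ∂μ := by
      rw [← lintegral_indicator ms]
      congr 1
      funext x
      rw [nnnorm_indicator_eq_indicator_nnnorm]
      by_cases hx : x ∈ s <;> simp [hx]
    rw [heq]
    have hmono : ∫⁻ x in s, (‖f x‖₊ : ℝ≥0∞) ∂μ
        ≤ ∫⁻ x in s, ((‖a x‖₊ : ℝ≥0∞) + ENNReal.ofReal M) ∂μ := by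
      refine lintegral_mono_ae ?_
      filter_upwards [ae_restrict_of_ae hbae] with x hbx
      have h1 : ‖f x‖ ≤ ‖a x‖ + ‖b x‖ := by rw [hab]; exact norm_add_le _ _
      calc (‖f x‖₊ : ℝ≥0∞) = ENNReal.ofReal ‖f x‖ := (ofReal_norm _).symm
        _ ≤ ENNReal.ofReal (‖a x‖ + M) := ENNReal.ofReal_le_ofReal (by linarith)
        _ ≤ ENNReal.ofReal ‖a x‖ + ENNReal.ofReal M := ENNReal.ofReal_add_le
        _ = (‖a x‖₊ : ℝ≥0∞) + ENNReal.ofReal M := by rw [ofReal_norm, enorm_eq_nnnorm]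
    have hadd2 : ∫⁻ x in s, ((‖a x‖₊ : ℝ≥0∞) + ENNReal.ofReal M) ∂μ
        = (∫⁻ x in s, (‖a x‖₊ : ℝ≥0∞) ∂μ) + ENNReal.ofReal M * μ s := by
      rw [lintegral_add_right _ measurable_const, setLIntegral_const]
    refine lt_of_le_of_lt (le_trans hmono (le_of_eq hadd2)) ?_
    have h3 : ∫⁻ x in s, (‖a x‖₊ : ℝ≥0∞) ∂μ ≤ ∫⁻ x, (‖a x‖₊ : ℝ≥0∞) ∂μ :=
      setLIntegral_le_lintegral _ _
    have h4 : (∫⁻ x, (‖a x‖₊ : ℝ≥0∞) ∂μ) < ⊤ := by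
      simp only [← enorm_eq_nnnorm]; rw [← eLpNorm_one_eq_lintegral_enorm]; exact ha.2
    exact ENNReal.add_lt_top.2 ⟨lt_of_le_of_lt h3 h4, ENNReal.mul_lt_top
      ENNReal.ofReal_lt_top hfin⟩
  · exact memLp_top_of_bound (hf.indicator ms.compl).aestronglyMeasurable δ
      (ae_of_all _ hscomp)


/-- weighted average -/
noncomputable def wavg {X : Type*} (T : (X → ℂ) → (X → ℂ)) (β : ℕ → ℂ) (n : ℕ)
    (u : X → ℂ) (x : X) : ℂ :=
  (1/(n:ℂ)) • ∑ k ∈ Finset.range n, β k • (T^[k] u) x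

lemma wavg_def {X : Type*} (T : (X → ℂ) → (X → ℂ)) (β : ℕ → ℂ) (n : ℕ)
    (u : X → ℂ) (x : X) :
    wavg T β n u x = (1/(n:ℂ)) • ∑ k ∈ Finset.range n, β k • (T^[k] u) x := rfl

/-- Besicovitch-weighted individual ergodic theorem in
`R = {f ∈ L¹ + L^∞ : μ_t(f) → 0}`, assuming its validity on `L¹`. -/
theorem besicovitch_weighted_averages_converge_au {X : Type*} [MeasurableSpace X]
    (μ : Measure X) [SigmaFinite μ] (T : (X → ℂ) → (X → ℂ))
    (hadd : ∀ f g : X → ℂ, MemL1Linf μ f → MemL1Linf μ g → T (f + g) = T f + T g)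
    (hsmul : ∀ (c : ℂ) (f : X → ℂ), MemL1Linf μ f → T (c • f) = c • T f)
    (hL1 : ∀ f : X → ℂ, MemLp f 1 μ → MemLp (T f) 1 μ ∧ eLpNorm (T f) 1 μ ≤ eLpNorm f 1 μ)
    (hLinf : ∀ f : X → ℂ, MemLp f ⊤ μ → MemLp (T f) ⊤ μ ∧ eLpNorm (T f) ⊤ μ ≤ eLpNorm f ⊤ μ)
    (hpos : ∀ f : X → ℂ, (∀ x, (f x).im = 0 ∧ 0 ≤ (f x).re) →
      ∀ x, (T f x).im = 0 ∧ 0 ≤ (T f x).re)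
    (β : ℕ → ℂ) (hβ : IsBesicovitch β)
    (hL1thm : ∀ g : X → ℂ, MemLp g 1 μ →
      ∃ ghat : X → ℂ, ∀ ε > (0 : ℝ), ∃ E : Set X, MeasurableSet E ∧
        μ Eᶜ ≤ ENNReal.ofReal ε ∧
        TendstoUniformlyOn
          (fun (n : ℕ) (x : X) => (1 / (n : ℂ)) • ∑ k ∈ Finset.range n, β k • (T^[k] g) x)
          ghat atTop E)
    (f : X → ℂ) (hf : Measurable f) (hmem : MemL1Linf μ f)
    (hR : Tendsto (rearr μ f) atTop (𝓝 0)) :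
    ∃ fhat : X → ℂ, MemL1Linf μ fhat ∧
      ∀ ε > (0 : ℝ), ∃ E : Set X, MeasurableSet E ∧ μ Eᶜ ≤ ENNReal.ofReal ε ∧
        TendstoUniformlyOn
          (fun (n : ℕ) (x : X) => (1 / (n : ℂ)) • ∑ k ∈ Finset.range n, β k • (T^[k] f) x)
          fhat atTop E := by
  classical
  obtain ⟨Cb, hCb⟩ := hβ.1
  set C : ℝ := max Cb 0 with hCdef
  have hC0 : 0 ≤ C := le_max_right _ _
  have hCb' : ∀ k, ‖β k‖ ≤ C := fun k => (hCb k).trans (le_max_left _ _)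
  have hδpos : ∀ m : ℕ, (0:ℝ) < 1/(m+1) := fun m => by positivity
  choose g h hgh hg hh hhb using fun m : ℕ => decomp hf hmem hR (hδpos m)
  choose ghat hghat using fun m => hL1thm (g m) (hg m)
  have IT : ∀ (m k : ℕ), T^[k] f = T^[k] (g m) + T^[k] (h m) ∧ MemLp (T^[k] (g m)) 1 μ ∧
      MemLp (T^[k] (h m)) ⊤ μ ∧ eLpNorm (T^[k] (g m)) 1 μ ≤ eLpNorm (g m) 1 μ ∧
      eLpNorm (T^[k] (h m)) ⊤ μ ≤ eLpNorm (h m) ⊤ μ := by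
    intro m k
    have := iter_facts μ T hadd hL1 hLinf (g m) (h m) (hg m) (hh m) k
    rwa [← hgh m] at this
  have hsplit : ∀ (m n : ℕ) (x : X),
      wavg T β n f x = wavg T β n (g m) x + wavg T β n (h m) x := by
    intro m n x
    simp only [wavg_def]
    rw [← smul_add, ← Finset.sum_add_distrib]
    congr 1
    refine Finset.sum_congr rfl fun k _ => ?_
    rw [← smul_add]
    congr 1
    rw [(IT m k).1]
    rfl
  have hbound : ∀ m : ℕ, ∀ᵐ x ∂μ, ∀ k : ℕ, ‖(T^[k] (h m)) x‖ ≤ 1/(m+1:ℝ) := by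
    intro m
    rw [ae_all_iff]
    intro k
    have h1 : eLpNormEssSup (T^[k] (h m)) μ ≤ ENNReal.ofReal (1/(m+1:ℝ)) := by
      rw [← eLpNorm_exponent_top]
      refine le_trans (IT m k).2.2.2.2 ?_
      rw [eLpNorm_exponent_top]
      exact eLpNormEssSup_le_of_ae_bound (ae_of_all _ (hhb m))
    filter_upwards [ae_le_eLpNormEssSup (f := T^[k] (h m)) (μ := μ)] with x hx
    have h2 : ENNReal.ofReal ‖(T^[k] (h m)) x‖ ≤ ENNReal.ofReal (1/(m+1:ℝ)) := by
      rw [ofReal_norm]; exact le_trans hx h1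
    exact (ENNReal.ofReal_le_ofReal_iff (hδpos m).le).1 h2
  have havg : ∀ (m n : ℕ) (x : X), (∀ k : ℕ, ‖(T^[k] (h m)) x‖ ≤ 1/(m+1:ℝ)) →
      ‖wavg T β n (h m) x‖ ≤ C * (1/(m+1:ℝ)) := by
    intro m n x hx
    rcases Nat.eq_zero_or_pos n with hn | hn
    · subst hn
      rw [wavg_def]
      simp only [Finset.range_zero, Finset.sum_empty, smul_zero, norm_zero]
      positivity
    · have hn' : (0:ℝ) < n := by exact_mod_cast hn
      rw [wavg_def]
      calc ‖(1/(n:ℂ)) • ∑ k ∈ Finset.range n, β k • (T^[k] (h m)) x‖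
          = ‖(1/(n:ℂ))‖ * ‖∑ k ∈ Finset.range n, β k • (T^[k] (h m)) x‖ := norm_smul _ _
        _ ≤ (1/(n:ℝ)) * ∑ k ∈ Finset.range n, ‖β k • (T^[k] (h m)) x‖ := by
            rw [show ‖(1/(n:ℂ))‖ = 1/(n:ℝ) by simp]
            exact mul_le_mul_of_nonneg_left (norm_sum_le _ _) (by positivity)
        _ ≤ (1/(n:ℝ)) * ∑ k ∈ Finset.range n, (C * (1/(m+1:ℝ))) := by
            refine mul_le_mul_of_nonneg_left (Finset.sum_le_sum fun k _ => ?_) (by positivity)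
            rw [norm_smul]
            exact mul_le_mul (hCb' k) (hx k) (norm_nonneg _) hC0
        _ = C * (1/(m+1:ℝ)) := by
            rw [Finset.sum_const, Finset.card_range, nsmul_eq_mul]
            field_simp
  have hAgm : ∀ (m n : ℕ), AEStronglyMeasurable (fun x => wavg T β n (g m) x) μ := by
    intro m n
    have h1 : ∀ k : ℕ, AEStronglyMeasurable (β k • T^[k] (g m)) μ := fun k =>
      ((IT m k).2.1.1).const_smul (β k)
    have h2 : AEStronglyMeasurable (fun x => ∑ k ∈ Finset.range n, β k • (T^[k] (g m)) x) μ :=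
      Finset.aestronglyMeasurable_fun_sum _ fun k _ => h1 k
    have h3 : AEStronglyMeasurable
        ((1/(n:ℂ)) • fun x => ∑ k ∈ Finset.range n, β k • (T^[k] (g m)) x) μ :=
      h2.const_smul _
    exact h3
  have hAhm : ∀ (m n : ℕ), AEStronglyMeasurable (fun x => wavg T β n (h m) x) μ := by
    intro m n
    have h1 : ∀ k : ℕ, AEStronglyMeasurable (β k • T^[k] (h m)) μ := fun k =>
      ((IT m k).2.2.1.1).const_smul (β k)
    have h2 : AEStronglyMeasurable (fun x => ∑ k ∈ Finset.range n, β k • (T^[k] (h m)) x) μ :=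
      Finset.aestronglyMeasurable_fun_sum _ fun k _ => h1 k
    have h3 : AEStronglyMeasurable
        ((1/(n:ℂ)) • fun x => ∑ k ∈ Finset.range n, β k • (T^[k] (h m)) x) μ :=
      h2.const_smul _
    exact h3
  have hFm : ∀ n : ℕ, AEStronglyMeasurable (fun x => wavg T β n f x) μ := by
    intro n
    have heq : (fun x => wavg T β n f x)
        = fun x => wavg T β n (g 0) x + wavg T β n (h 0) x := funext fun x => hsplit 0 n x
    rw [heq]
    exact (hAgm 0 n).add (hAhm 0 n)
  have hA1 : ∀ n : ℕ, eLpNorm (fun x => wavg T β n (g 0) x) 1 μ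
      ≤ ENNReal.ofReal C * eLpNorm (g 0) 1 μ := by
    intro n
    rcases Nat.eq_zero_or_pos n with hn | hn
    · subst hn
      simp only [wavg_def, Finset.range_zero, Finset.sum_empty, smul_zero]
      simp
    · have h1 : eLpNorm (fun x => wavg T β n (g 0) x) 1 μ
          = (‖(1/(n:ℂ))‖₊ : ℝ≥0∞)
            * eLpNorm (fun x => ∑ k ∈ Finset.range n, β k • (T^[k] (g 0)) x) 1 μ := by
        rw [← enorm_eq_nnnorm, ← eLpNorm_const_smul]
        rfl
      have hsum : (fun x => ∑ k ∈ Finset.range n, β k • (T^[k] (g 0)) x)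
          = ∑ k ∈ Finset.range n, fun x => β k • (T^[k] (g 0)) x := by
        funext x; simp
      have hasm : ∀ k : ℕ, AEStronglyMeasurable (β k • T^[k] (g 0)) μ := fun k =>
        ((IT 0 k).2.1.1).const_smul (β k)
      have h2 : eLpNorm (∑ k ∈ Finset.range n, fun x => β k • (T^[k] (g 0)) x) 1 μ
          ≤ ∑ k ∈ Finset.range n, eLpNorm (fun x => β k • (T^[k] (g 0)) x) 1 μ :=
        eLpNorm_sum_le (fun k _ => hasm k) le_rfl
      have h3 : ∀ k : ℕ, eLpNorm (fun x => β k • (T^[k] (g 0)) x) 1 μ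
          ≤ ENNReal.ofReal C * eLpNorm (g 0) 1 μ := by
        intro k
        have heq : eLpNorm (fun x => β k • (T^[k] (g 0)) x) 1 μ
            = (‖β k‖₊ : ℝ≥0∞) * eLpNorm (T^[k] (g 0)) 1 μ := by
          rw [← enorm_eq_nnnorm, ← eLpNorm_const_smul]
          rfl
        rw [heq]
        refine mul_le_mul' ?_ (IT 0 k).2.2.2.1
        rw [← enorm_eq_nnnorm, ← ofReal_norm]
        exact ENNReal.ofReal_le_ofReal (hCb' k)
      have hinv : (‖(1/(n:ℂ))‖₊ : ℝ≥0∞) * (n : ℝ≥0∞) = 1 := by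
        have h5 : (‖(1/(n:ℂ))‖₊ : ℝ≥0∞) = ENNReal.ofReal (1/(n:ℝ)) := by
          rw [← enorm_eq_nnnorm, ← ofReal_norm]; congr 1; simp
        rw [h5, ← ENNReal.ofReal_natCast n, ← ENNReal.ofReal_mul (by positivity)]
        rw [one_div, inv_mul_cancel₀ (show (n:ℝ) ≠ 0 by exact_mod_cast hn.ne')]
        simp
      calc eLpNorm (fun x => wavg T β n (g 0) x) 1 μ
          = (‖(1/(n:ℂ))‖₊ : ℝ≥0∞)
            * eLpNorm (∑ k ∈ Finset.range n, fun x => β k • (T^[k] (g 0)) x) 1 μ := by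
            rw [h1, hsum]
        _ ≤ (‖(1/(n:ℂ))‖₊ : ℝ≥0∞)
            * ∑ k ∈ Finset.range n, (ENNReal.ofReal C * eLpNorm (g 0) 1 μ) :=
            mul_le_mul' le_rfl (le_trans h2 (Finset.sum_le_sum fun k _ => h3 k))
        _ = (‖(1/(n:ℂ))‖₊ : ℝ≥0∞)
            * ((n : ℝ≥0∞) * (ENNReal.ofReal C * eLpNorm (g 0) 1 μ)) := by
            rw [Finset.sum_const, Finset.card_range, nsmul_eq_mul]
        _ = ENNReal.ofReal C * eLpNorm (g 0) 1 μ := by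
            rw [← mul_assoc, hinv, one_mul]
  set Bad := {x : X | ¬ ∀ m k : ℕ, ‖(T^[k] (h m)) x‖ ≤ 1/(m+1:ℝ)} with hBad
  have hBadnull : μ Bad = 0 := ae_iff.1 (ae_all_iff.2 hbound)
  set N := toMeasurable μ Bad with hNdef
  have hNmeas : MeasurableSet N := measurableSet_toMeasurable μ Bad
  have hNnull : μ N = 0 := by rw [hNdef, measure_toMeasurable]; exact hBadnull
  set fhat : X → ℂ := fun x =>
    if hx : ∃ L : ℂ, Tendsto (fun n => wavg T β n f x) atTop (𝓝 L) then hx.choose else 0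
    with hfhat
  have key : ∀ ε > (0:ℝ), ∃ E : Set X, MeasurableSet E ∧ μ Eᶜ ≤ ENNReal.ofReal ε ∧
      TendstoUniformlyOn (fun n x => wavg T β n f x) fhat atTop E := by
    intro ε hε
    choose E hEmeas hEμ hEu using fun m : ℕ => hghat m (ε/2/2^m) (by positivity)
    set Eg := (⋂ m, E m) \ N with hEg
    have hEgm : MeasurableSet Eg := (MeasurableSet.iInter fun m => hEmeas m).diff hNmeas
    have hEgc : μ Egᶜ ≤ ENNReal.ofReal ε := by
      have hceq : Egᶜ = (⋃ m, (E m)ᶜ) ∪ N := by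
        rw [hEg, Set.diff_eq, Set.compl_inter, compl_compl, Set.compl_iInter, Set.union_comm]
      rw [hceq]
      calc μ ((⋃ m, (E m)ᶜ) ∪ N) ≤ μ (⋃ m, (E m)ᶜ) + μ N := measure_union_le _ _
        _ = μ (⋃ m, (E m)ᶜ) := by rw [hNnull, add_zero]
        _ ≤ ∑' m, μ (E m)ᶜ := measure_iUnion_le _
        _ ≤ ∑' m, ENNReal.ofReal (ε/2/2^m) := ENNReal.tsum_le_tsum fun m => hEμ m
        _ = ENNReal.ofReal (∑' m : ℕ, ε/2/2^m) :=
            (ENNReal.ofReal_tsum_of_nonneg (fun m => by positivity)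
              (summable_geometric_two' ε)).symm
        _ = ENNReal.ofReal ε := by rw [tsum_geometric_two' ε]
    have hUC : UniformCauchySeqOn (fun n x => wavg T β n f x) atTop Eg := by
      rw [Metric.uniformCauchySeqOn_iff]
      intro η hη
      obtain ⟨m, hm⟩ := exists_nat_one_div_lt (show (0:ℝ) < η/(4*(C+1)) by positivity)
      have hCm : C * (1/(m+1:ℝ)) < η/4 := by
        have h0 : (0:ℝ) < 1/(m+1:ℝ) := hδpos m
        have h1 : C * (1/(m+1:ℝ)) ≤ (C+1) * (1/(m+1:ℝ)) := by nlinarith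
        have h2 : (C+1) * (1/(m+1:ℝ)) < (C+1) * (η/(4*(C+1))) :=
          mul_lt_mul_of_pos_left hm (by linarith)
        have h3 : (C+1) * (η/(4*(C+1))) = η/4 := by
          field_simp
        linarith
      have hev := Metric.tendstoUniformlyOn_iff.1 (hEu m) (η/4) (by positivity)
      rw [eventually_atTop] at hev
      obtain ⟨N0, hN0⟩ := hev
      refine ⟨N0, fun p hp q hq x hx => ?_⟩
      have hxE : x ∈ E m := Set.mem_iInter.1 hx.1 m
      have hxN : ∀ m' k : ℕ, ‖(T^[k] (h m')) x‖ ≤ 1/(m'+1:ℝ) := by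
        by_contra hc
        exact hx.2 (subset_toMeasurable μ Bad hc)
      have h1 : ‖ghat m x - wavg T β p (g m) x‖ < η/4 := by
        have := hN0 p hp x hxE
        rw [dist_eq_norm] at this
        exact this
      have h2 : ‖ghat m x - wavg T β q (g m) x‖ < η/4 := by
        have := hN0 q hq x hxE
        rw [dist_eq_norm] at this
        exact this
      have h3 := havg m p x (fun k => hxN m k)
      have h4 := havg m q x (fun k => hxN m k)
      rw [dist_eq_norm]
      have key4 : ‖wavg T β p f x - wavg T β q f x‖
          ≤ ‖ghat m x - wavg T β p (g m) x‖ + ‖ghat m x - wavg T β q (g m) x‖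
            + ‖wavg T β p (h m) x‖ + ‖wavg T β q (h m) x‖ := by
        rw [hsplit m p x, hsplit m q x]
        have hrw : wavg T β p (g m) x + wavg T β p (h m) x
            - (wavg T β q (g m) x + wavg T β q (h m) x)
            = -(ghat m x - wavg T β p (g m) x) + (ghat m x - wavg T β q (g m) x)
              + wavg T β p (h m) x + (- wavg T β q (h m) x) := by ring
        rw [hrw]
        refine le_trans (norm_add_le _ _) (add_le_add ?_ (le_of_eq (norm_neg _)))
        refine le_trans (norm_add_le _ _) (add_le_add ?_ le_rfl)
        refine le_trans (norm_add_le _ _) (add_le_add (le_of_eq (norm_neg _)) le_rfl)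
      have h5 : ‖wavg T β p (h m) x‖ < η/4 := lt_of_le_of_lt h3 hCm
      have h6 : ‖wavg T β q (h m) x‖ < η/4 := lt_of_le_of_lt h4 hCm
      calc ‖wavg T β p f x - wavg T β q f x‖
          ≤ ‖ghat m x - wavg T β p (g m) x‖ + ‖ghat m x - wavg T β q (g m) x‖
            + ‖wavg T β p (h m) x‖ + ‖wavg T β q (h m) x‖ := key4
        _ < η := by linarith
    have hptw : ∀ x ∈ Eg, Tendsto (fun n => wavg T β n f x) atTop (𝓝 (fhat x)) := by
      intro x hx
      have hcs : CauchySeq (fun n => wavg T β n f x) := by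
        rw [Metric.cauchySeq_iff]
        intro η hη
        obtain ⟨N0, hN0⟩ := Metric.uniformCauchySeqOn_iff.1 hUC η hη
        exact ⟨N0, fun p hp q hq => hN0 p hp q hq x hx⟩
      obtain ⟨L, hL⟩ := cauchySeq_tendsto_of_complete hcs
      have hex : ∃ L : ℂ, Tendsto (fun n => wavg T β n f x) atTop (𝓝 L) := ⟨L, hL⟩
      have heq : fhat x = hex.choose := by
        simp only [hfhat]
        exact dif_pos hex
      rw [heq]
      exact hex.choose_spec
    exact ⟨Eg, hEgm, hEgc, hUC.tendstoUniformlyOn_of_tendsto hptw⟩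
  have hae_f : ∀ᵐ x ∂μ, Tendsto (fun n => wavg T β n f x) atTop (𝓝 (fhat x)) := by
    refine ae_of_au fun ε hε => ?_
    obtain ⟨E, h1, h2, h3⟩ := key ε hε
    exact ⟨E, h1, h2, fun x hx => h3.tendsto_at hx⟩
  have hae_g0 : ∀ᵐ x ∂μ, Tendsto (fun n => wavg T β n (g 0) x) atTop (𝓝 (ghat 0 x)) := by
    refine ae_of_au fun ε hε => ?_
    obtain ⟨E, h1, h2, h3⟩ := hghat 0 ε hε
    exact ⟨E, h1, h2, fun x hx => h3.tendsto_at hx⟩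
  have hfhatm : AEStronglyMeasurable fhat μ :=
    aestronglyMeasurable_of_tendsto_ae atTop hFm hae_f
  have hghat0m : AEStronglyMeasurable (ghat 0) μ :=
    aestronglyMeasurable_of_tendsto_ae atTop (hAgm 0) hae_g0
  have hghat0L1 : MemLp (ghat 0) 1 μ := by
    refine ⟨hghat0m, ?_⟩
    rw [eLpNorm_one_eq_lintegral_enorm]; simp only [enorm_eq_nnnorm]
    have heq : ∫⁻ x, (‖ghat 0 x‖₊ : ℝ≥0∞) ∂μ
        = ∫⁻ x, liminf (fun n => (‖wavg T β n (g 0) x‖₊ : ℝ≥0∞)) atTop ∂μ := by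
      refine lintegral_congr_ae ?_
      filter_upwards [hae_g0] with x hx
      exact ((ENNReal.tendsto_coe.2 hx.nnnorm).liminf_eq).symm
    rw [heq]
    have hlim : liminf (fun n => ∫⁻ a, (‖wavg T β n (g 0) a‖₊ : ℝ≥0∞) ∂μ) atTop
        ≤ ENNReal.ofReal C * eLpNorm (g 0) 1 μ := by
      refine liminf_le_of_frequently_le (Frequently.of_forall fun n => ?_)
      simp only [← enorm_eq_nnnorm]; rw [← eLpNorm_one_eq_lintegral_enorm]
      exact hA1 n
    exact lt_of_le_of_lt
      (le_trans (lintegral_liminf_le' fun n => (hAgm 0 n).enorm) hlim)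
      (ENNReal.mul_lt_top ENNReal.ofReal_lt_top (hg 0).2)
  have hdiffb : ∀ᵐ x ∂μ, ‖fhat x - ghat 0 x‖ ≤ C * (1/((0:ℕ)+1:ℝ)) := by
    filter_upwards [hae_f, hae_g0, hbound 0] with x h1 h2 h3
    have htend : Tendsto (fun n => ‖wavg T β n f x - wavg T β n (g 0) x‖) atTop
        (𝓝 ‖fhat x - ghat 0 x‖) := (h1.sub h2).norm
    refine le_of_tendsto' htend fun n => ?_
    have heq : wavg T β n f x - wavg T β n (g 0) x = wavg T β n (h 0) x := by
      rw [hsplit 0 n x]; ring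
    rw [heq]
    exact havg 0 n x h3
  have hdiffinf : MemLp (fun x => fhat x - ghat 0 x) ⊤ μ :=
    memLp_top_of_bound (hfhatm.sub hghat0m) _ hdiffb
  refine ⟨fhat, ⟨ghat 0, fun x => fhat x - ghat 0 x, funext fun x => ?_, hghat0L1, hdiffinf⟩, key⟩
  show fhat x = ghat 0 x + (fhat x - ghat 0 x)
  ring
end
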